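/- arXiv:2409.16107 — 4 statements merged into one kernel-verified Lean document; each statement's English description precedes it below -/
import Mathlib

section
/- Let q, d be natural numbers with q > 0 and 2^d dividing q. Then for every α with 0 ≤ α < q and every ε with 0 ≤ ε < 2^d, Dec_{q,d}((α + (q/2^d)·ε) mod q) = (Dec_{q,d}(α) + ε) mod 2^d. (Countermeasure correctness: adding the encoding of a mask ε to the decoder input shifts the decoded message by ε modulo 2^d.) -/
/-- Decoding: round `2^d * α / q` to the nearest integer (ties up), reduce mod `2^d`. -/
def Dec (q d α : ℕ) : ℕ := ((2 ^ (d + 1) * α + q) / (2 * q)) % 2 ^ d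

/-- Encoding (when `2^d ∣ q`): `Enc q d β = (q / 2^d) * β`. -/
def Enc (q d β : ℕ) : ℕ := (q / 2 ^ d) * β

theorem countermeasure_correctness (q d : ℕ) (hq : 0 < q) (hdvd : 2 ^ d ∣ q) :
    ∀ α < q, ∀ ε < 2 ^ d,
      Dec q d ((α + Enc q d ε) % q) = (Dec q d α + ε) % 2 ^ d := by
  intro α hα ε hε
  obtain ⟨m, hm⟩ := hdvd
  have h2d : 0 < (2 : ℕ) ^ d := pow_pos (by norm_num) d
  have hm0 : 0 < m := by
    rcases Nat.eq_zero_or_pos m with h | h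
    · subst h; simp [hm] at hq
    · exact h
  have henc : Enc q d ε = m * ε := by
    simp [Enc, hm, Nat.mul_div_cancel_left _ h2d]
  have h2q : 0 < 2 * q := by omega
  have hkey : ∀ a k : ℕ, (a + 2 * q * k) / (2 * q) = a / (2 * q) + k := fun a k =>
    Nat.add_mul_div_left a k h2q
  have hqm : 2 ^ (d + 1) * (m * ε) = 2 * q * ε := by
    rw [hm]; ring
  rw [henc]
  by_cases hcase : α + m * ε < q
  · rw [Nat.mod_eq_of_lt hcase]
    have : 2 ^ (d + 1) * (α + m * ε) + q = (2 ^ (d + 1) * α + q) + 2 * q * ε := by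
      rw [Nat.mul_add, hqm]; ring
    unfold Dec
    rw [this, hkey, Nat.mod_add_mod]
  · push_neg at hcase
    have hlt : α + m * ε < 2 * q := by
      have : m * ε < q := by nlinarith
      omega
    have hmod : (α + m * ε) % q = α + m * ε - q := by
      rw [Nat.mod_eq_sub_mod hcase, Nat.mod_eq_of_lt (by omega)]
    set x := α + m * ε - q with hx
    have hxeq : x + q = α + m * ε := by omega
    -- key numerator equation
    have hnum : (2 ^ (d + 1) * α + q) + 2 * q * ε = (2 ^ (d + 1) * x + q) + 2 * q * 2 ^ d := by
      have h1 : 2 * q * 2 ^ d = 2 ^ (d + 1) * q := by ring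
      have h2 : 2 ^ (d + 1) * (x + q) = 2 ^ (d + 1) * (α + m * ε) := by rw [hxeq]
      have h3 : 2 ^ (d + 1) * (α + m * ε) = 2 ^ (d + 1) * α + 2 * q * ε := by
        rw [Nat.mul_add, hqm]
      rw [h1]
      nlinarith [h2, h3]
    have hdiv : ((2 ^ (d + 1) * α + q) + 2 * q * ε) / (2 * q)
        = (2 ^ (d + 1) * α + q) / (2 * q) + ε := hkey _ _
    have hdiv2 : ((2 ^ (d + 1) * x + q) + 2 * q * 2 ^ d) / (2 * q)
        = (2 ^ (d + 1) * x + q) / (2 * q) + 2 ^ d := hkey _ _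
    have hQ : (2 ^ (d + 1) * α + q) / (2 * q) + ε
        = (2 ^ (d + 1) * x + q) / (2 * q) + 2 ^ d := by
      rw [← hdiv, ← hdiv2, hnum]
    unfold Dec
    rw [hmod, Nat.mod_add_mod, hQ, Nat.add_mod_right]
end

section
/- Let q be an even natural number with q > 0. Then for every α with 0 ≤ α < q and every b ∈ {0,1}, Dec_{q,1}((α + b·(q/2)) mod q) = Dec_{q,1}(α) XOR b. In particular, adding q/2 to the decoder input flips the decoded bit. -/
theorem bitflip_countermeasure (q : ℕ) (hq : 0 < q) (heven : 2 ∣ q) :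
    ∀ α < q, ∀ b < 2,
      Dec q 1 ((α + b * (q / 2)) % q) = Dec q 1 α ^^^ b := by
  obtain ⟨m, rfl⟩ := heven
  have hm : 0 < m := by omega
  intro α hα b hb
  have key : ∀ x, Dec (2*m) 1 x = (4*x + 2*m) / (4*m) % 2 := by
    intro x
    unfold Dec
    norm_num
    congr 1 <;> ring_nf
  have hdiv : ∀ n k : ℕ, k*(4*m) ≤ n → n < (k+1)*(4*m) → n/(4*m) = k := by
    intro n k h1 h2
    exact Nat.div_eq_of_lt_le h1 h2
  interval_cases b
  · simp [Nat.mod_eq_of_lt hα]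
  · have hq2 : 2 * m / 2 = m := by omega
    rw [hq2, one_mul, key, key]
    by_cases hcase : α < m
    · have hin : (α + m) % (2*m) = α + m := Nat.mod_eq_of_lt (by omega)
      rw [hin]
      by_cases h : 2*α < m
      · rw [hdiv (4*(α+m) + 2*m) 1 (by omega) (by omega),
            hdiv (4*α + 2*m) 0 (by omega) (by omega)]
        decide
      · rw [hdiv (4*(α+m) + 2*m) 2 (by omega) (by omega),
            hdiv (4*α + 2*m) 1 (by omega) (by omega)]
        decide
    · have hin : (α + m) % (2*m) = α - m := by
        have : α + m = (α - m) + 1 * (2*m) := by omega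
        rw [this, Nat.add_mul_mod_self_right, Nat.mod_eq_of_lt (by omega)]
      rw [hin]
      by_cases h : 2*α < 3*m
      · rw [hdiv (4*(α-m) + 2*m) 0 (by omega) (by omega),
            hdiv (4*α + 2*m) 1 (by omega) (by omega)]
        decide
      · rw [hdiv (4*(α-m) + 2*m) 1 (by omega) (by omega),
            hdiv (4*α + 2*m) 2 (by omega) (by omega)]
        decide
end

section
/- Let d ≥ 1 and ε, m ∈ {0,…,2^d−1}. Then Δ^d_{2^d−ε}(m) = −Δ^d_ε(2^d−1−m), i.e., HW((m + 2^d − ε) mod 2^d) − HW(m) = −( HW((2^d−1−m+ε) mod 2^d) − HW(2^d−1−m) ). (The Hamming-weight bias table for a bias larger than q/2 is obtained from the column of the complementary bias by reversing the order of the rows and multiplying by −1.) -/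
/-- Hamming weight: number of ones in the binary expansion. -/
def HW (m : ℕ) : ℕ := (Nat.digits 2 m).sum

/-- Hamming-weight bias `Δ^d_ε(m) = HW((m+ε) mod 2^d) − HW(m)`. -/
def Δ (d ε m : ℕ) : ℤ := (HW ((m + ε) % 2 ^ d) : ℤ) - (HW m : ℤ)

/-!
Complementing the low `d` bits, `x ↦ 2^d - 1 - x`, turns every digit `b` into `1 - b`, so
`HW x + HW (2^d - 1 - x) = d`. Modulo `2^d` the complement of `m + (2^d - ε)` is
`(2^d - 1 - m) + ε`, because the two sums add up to `2·2^d - 1`. Hence both biases are differences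
of `d - HW` of complementary arguments, and they are negatives of each other.
-/

theorem Nat.mod_add_mod_eq_sub_one_of_dvd {n a b : ℕ} (h : n ∣ a + b + 1) :
    a % n + b % n = n - 1 := by
  have hn : n ≠ 0 := by rintro rfl; simp at h
  have hdvd : n ∣ a % n + b % n + 1 := by
    rw [Nat.dvd_iff_mod_eq_zero] at h ⊢
    simpa [Nat.add_mod, Nat.mod_mod] using h
  have ha := Nat.mod_lt a (Nat.pos_of_ne_zero hn)
  have hb := Nat.mod_lt b (Nat.pos_of_ne_zero hn)
  have := Nat.eq_of_dvd_of_lt_two_mul (by omega) hdvd (by omega)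
  omega

lemma HW_two_mul_add {b : ℕ} (hb : b < 2) (y : ℕ) : HW (2 * y + b) = b + HW y := by
  rcases Nat.eq_zero_or_pos (2 * y + b) with h | h
  · obtain ⟨rfl, rfl⟩ : y = 0 ∧ b = 0 := by omega
    rfl
  · rw [HW, Nat.digits_def' (by norm_num) h, List.sum_cons, ← HW]
    congr 2 <;> omega

lemma HW_add_HW_two_pow_sub_one_sub {d x : ℕ} (hx : x < 2 ^ d) :
    HW x + HW (2 ^ d - 1 - x) = d := by
  induction d generalizing x with
  | zero =>
    obtain rfl : x = 0 := by simpa using hx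
    rfl
  | succ d ih =>
    obtain ⟨y, b, hb, rfl⟩ : ∃ y b, b < 2 ∧ x = 2 * y + b := ⟨x / 2, x % 2, x.mod_lt two_pos, by omega⟩
    rw [pow_succ] at hx ⊢
    have hcompl : 2 ^ d * 2 - 1 - (2 * y + b) = 2 * (2 ^ d - 1 - y) + (1 - b) := by omega
    have := ih (x := y) (by omega)
    rw [hcompl, HW_two_mul_add hb, HW_two_mul_add (by omega)]
    omega

theorem bias_table_symmetry_general (d : ℕ) (ε m : ℕ)
    (hε : ε < 2 ^ d) (hm : m < 2 ^ d) :
    Δ d (2 ^ d - ε) m = - Δ d ε (2 ^ d - 1 - m) := by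
  rw [Δ, Δ]
  set A := (m + (2 ^ d - ε)) % 2 ^ d
  set B := (2 ^ d - 1 - m + ε) % 2 ^ d
  have hAB : A + B = 2 ^ d - 1 :=
    Nat.mod_add_mod_eq_sub_one_of_dvd ⟨2, by omega⟩
  have hB : B < 2 ^ d := Nat.mod_lt _ (Nat.two_pow_pos d)
  have hHW_A : HW A + HW B = d := by
    rw [show A = 2 ^ d - 1 - B by omega, add_comm]
    exact HW_add_HW_two_pow_sub_one_sub hB
  have hHW_m := HW_add_HW_two_pow_sub_one_sub hm
  omega

theorem bias_table_symmetry (d : ℕ) (hd : 1 ≤ d) (ε m : ℕ)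
    (hε : ε < 2 ^ d) (hm : m < 2 ^ d) :
    Δ d (2 ^ d - ε) m = - Δ d ε (2 ^ d - 1 - m) :=
  bias_table_symmetry_general d ε m hε hm
end

section
/- Let q, d be natural numbers with q > 0 and 2^d dividing q, and let mask₁, …, mask_k ∈ {0,…,2^d−1} be any finite list of masks. Then for every α with 0 ≤ α < q, Dec_{q,d}((α + Σ_{i=1}^{k} Enc_{q,d}(mask_i)) mod q) = (Dec_{q,d}(α) + Σ_{i=1}^{k} mask_i) mod 2^d. (Scalability of the countermeasure: applying several encoded masks in succession shifts the decoded word by the sum of the masks modulo 2^d, simulating higher-order masking.) -/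
lemma dec_mod_q (q d y : ℕ) (hq : 0 < q) : Dec q d (y % q) = Dec q d y := by
  unfold Dec
  conv_rhs => rw [← Nat.div_add_mod y q]
  have h1 : 2 ^ (d + 1) * (q * (y / q) + y % q) + q
      = (2 ^ (d + 1) * (y % q) + q) + (2 * q) * (2 ^ d * (y / q)) := by
    rw [pow_succ]; ring
  rw [h1, Nat.add_mul_div_left _ _ (by positivity), Nat.add_mul_mod_self_left]

lemma dec_add_enc (q d x s : ℕ) (hq : 0 < q) (hdvd : 2 ^ d ∣ q) :
    Dec q d (x + Enc q d s) = (Dec q d x + s) % 2 ^ d := by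
  obtain ⟨c, hc⟩ := hdvd
  unfold Dec Enc
  have hc' : q / 2 ^ d = c := by
    rw [hc]; exact Nat.mul_div_cancel_left c (pow_pos two_pos d)
  have h1 : 2 ^ (d + 1) * (x + q / 2 ^ d * s) + q
      = (2 ^ (d + 1) * x + q) + (2 * q) * s := by
    rw [hc']; subst hc; rw [pow_succ]; ring
  rw [h1, Nat.add_mul_div_left _ _ (by positivity)]
  exact (Nat.mod_add_mod _ _ _).symm

lemma enc_sum (q d : ℕ) (l : List ℕ) :
    (l.map (Enc q d)).sum = Enc q d l.sum := by
  induction l with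
  | nil => simp [Enc]
  | cons a t ih => simp [Enc, mul_add] at *; omega

theorem countermeasure_scalability (q d : ℕ) (hq : 0 < q) (hdvd : 2 ^ d ∣ q)
    (masks : List ℕ) (hmasks : ∀ m ∈ masks, m < 2 ^ d) :
    ∀ α < q,
      Dec q d ((α + (masks.map (Enc q d)).sum) % q)
        = (Dec q d α + masks.sum) % 2 ^ d := by
  intro α hα
  rw [enc_sum, dec_mod_q _ _ _ hq, dec_add_enc _ _ _ _ hq hdvd]
end
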